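/- (Lemma 2.1) Let B ∈ ℝ^{n×n}, let i be an index with B_{ii} ≠ 0, and let EST^m be the generalized stochastic diagonal estimator built from m i.i.d. standard Gaussian query vectors. For any 0 < ε < 1 and 0 < δ < 1, if m ≥ (1/(ε² δ))·(1 + ‖[B]_{i,:}‖₂² / B_{ii}²), then P{ |(EST^m − diag(B))_i| ≤ ε·|B_{ii}| } ≥ 1 − δ. -/

import Mathlib

/-!
The estimator is the sample mean of `m` independent copies of `g(ω) = ωᵢ (Bω)ᵢ`, `ω ~ N(0, Iₙ)`.
Expanding `g` and `g²` into monomials in the coordinates and using the Gaussian moments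
`𝔼 ω = 0`, `𝔼 ω² = 1`, `𝔼 ω⁴ = 3` gives `𝔼 g = Bᵢᵢ` and `Var g = Bᵢᵢ² + ‖[B]ᵢ,:‖₂²`, so the sample
mean has variance `Var g / m`, and Chebyshev's inequality gives the bound.
-/

open MeasureTheory ProbabilityTheory Real
open scoped Matrix Nat

lemma one_sub_le_measure_of_compl_subset {α : Type*} [MeasurableSpace α] {μ : Measure α}
    [IsProbabilityMeasure μ] {s t : Set α} (h : sᶜ ⊆ t) : 1 - μ t ≤ μ s := by
  rw [tsub_le_iff_left, ← measure_univ (μ := μ), add_comm]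
  exact (measure_univ_le_add_compl s).trans (by gcongr)

section SampleMean

variable {Ω ι : Type*} [MeasurableSpace Ω] [Fintype ι] {ν : Measure Ω} [IsProbabilityMeasure ν]
  {f : Ω → ℝ}

lemma memLp_sampleMean (hf : MemLp f 2 ν) :
    MemLp (fun x : ι → Ω => (Fintype.card ι : ℝ)⁻¹ * ∑ k, f (x k)) 2 (Measure.pi fun _ => ν) :=
  (memLp_finsetSum _ fun k _ => hf.comp_measurePreserving (measurePreserving_eval _ k)).const_mul _

lemma integral_sampleMean [Nonempty ι] (hf : Integrable f ν) :
    ∫ x, (Fintype.card ι : ℝ)⁻¹ * ∑ k, f (x k) ∂(Measure.pi fun _ : ι => ν) = ∫ ω, f ω ∂ν := by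
  rw [integral_const_mul, integral_finsetSum _ fun k _ => integrable_comp_eval hf]
  simp [integral_comp_eval (μ := fun _ : ι => ν) hf.aestronglyMeasurable]

lemma variance_sampleMean (hf : MemLp f 2 ν) :
    Var[fun x : ι → Ω => (Fintype.card ι : ℝ)⁻¹ * ∑ k, f (x k); Measure.pi fun _ => ν]
      = Var[f; ν] / Fintype.card ι := by
  have h := variance_sum_pi (μ := fun _ : ι => ν) (X := fun _ => f) fun _ => hf
  simp only [Finset.sum_fn, Finset.sum_const, Finset.card_univ, nsmul_eq_mul] at h
  rw [variance_const_mul, h]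
  field_simp

lemma meas_ge_abs_sampleMean_sub_le_variance_div [Nonempty ι] (hf : MemLp f 2 ν) {c : ℝ}
    (hc : 0 < c) :
    (Measure.pi fun _ : ι => ν) {x | c ≤ |(Fintype.card ι : ℝ)⁻¹ * ∑ k, f (x k) - ∫ ω, f ω ∂ν|}
      ≤ ENNReal.ofReal (Var[f; ν] / (Fintype.card ι * c ^ 2)) := by
  have h := meas_ge_le_variance_div_sq (memLp_sampleMean (ι := ι) hf) hc
  rwa [integral_sampleMean (hf.integrable one_le_two), variance_sampleMean hf, div_div] at h

end SampleMean

lemma integral_pow_even_gaussianReal (k : ℕ) :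
    ∫ x, x ^ (2 * k) ∂gaussianReal 0 1 = (2 * k - 1 : ℕ)‼ := by
  -- the integrand in the even, real-power form that `integral_rpow_mul_exp_neg_mul_rpow` needs
  have hpdf (x : ℝ) : gaussianPDFReal 0 1 x • x ^ (2 * k)
      = (√(2 * π))⁻¹ * (|x| ^ (2 * k : ℝ) * exp (-(1 / 2) * |x| ^ (2 : ℝ))) := by
    rw [gaussianPDFReal, smul_eq_mul, rpow_two, sq_abs, ← Nat.cast_ofNat, ← Nat.cast_mul,
      rpow_natCast, pow_abs, pow_mul, abs_of_nonneg (by positivity), ← pow_mul]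
    simp only [NNReal.coe_one, mul_one, sub_zero]
    ring_nf
  have hscale : (1 / 2 : ℝ) ^ (-((2 * k : ℝ) + 1) / 2) = 2 ^ k * √2 := by
    rw [one_div, inv_rpow zero_le_two, ← rpow_neg zero_le_two, sqrt_eq_rpow,
      ← rpow_natCast, ← rpow_add zero_lt_two]
    ring_nf
  rw [integral_gaussianReal_eq_integral_smul one_ne_zero]
  simp_rw [hpdf]
  rw [integral_const_mul,
    integral_comp_abs (f := fun x => x ^ (2 * k : ℝ) * exp (-(1 / 2) * x ^ (2 : ℝ))),
    integral_rpow_mul_exp_neg_mul_rpow two_pos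
      (by linarith [show (0 : ℝ) ≤ 2 * k by positivity]) one_half_pos,
    show ((2 * k : ℝ) + 1) / 2 = k + 1 / 2 by ring, Gamma_nat_add_half, hscale,
    sqrt_mul zero_le_two]
  field_simp

lemma integral_sq_gaussianReal : ∫ x, x ^ 2 ∂gaussianReal 0 1 = 1 := by
  simpa using integral_pow_even_gaussianReal 1

lemma integral_pow_four_gaussianReal : ∫ x, x ^ 4 ∂gaussianReal 0 1 = 3 := by
  simpa using integral_pow_even_gaussianReal 2

noncomputable abbrev stdGaussianPi (ι : Type*) [Fintype ι] : Measure (ι → ℝ) :=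
  Measure.pi fun _ : ι => gaussianReal 0 1

section StdGaussianPi

variable {ι : Type*} [Fintype ι]

lemma integral_prod_pow_stdGaussianPi (e : ι → ℕ) :
    ∫ ω, ∏ l, ω l ^ e l ∂stdGaussianPi ι = ∏ l, ∫ x, x ^ e l ∂gaussianReal 0 1 :=
  integral_fintype_prod_eq_prod fun l x => x ^ e l

lemma integrable_prod_pow_stdGaussianPi (e : ι → ℕ) :
    Integrable (fun ω => ∏ l, ω l ^ e l) (stdGaussianPi ι) :=
  Integrable.fintype_prod fun l =>
    integrable_pow_of_mem_interior_integrableExpSet (X := id) (by simp) (e l)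

lemma integral_prod_pow_stdGaussianPi_eq_zero {e : ι → ℕ} {a : ι} (ha : e a = 1) :
    ∫ ω, ∏ l, ω l ^ e l ∂stdGaussianPi ι = 0 := by
  rw [integral_prod_pow_stdGaussianPi]
  exact Finset.prod_eq_zero (Finset.mem_univ a) (by simp [ha])

variable [DecidableEq ι]

lemma prod_pow_ite_eq (ω : ι → ℝ) (a : ι) (k : ℕ) :
    ∏ l, ω l ^ (if l = a then k else 0) = ω a ^ k := by
  simp [pow_ite]

lemma mul_eq_prod_pow (ω : ι → ℝ) (a b : ι) :
    ω a * ω b = ∏ l, ω l ^ ((if l = a then 1 else 0) + (if l = b then 1 else 0)) := by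
  simp only [pow_add, Finset.prod_mul_distrib, prod_pow_ite_eq, pow_one]

lemma sq_mul_mul_eq_prod_pow (ω : ι → ℝ) (a b c : ι) :
    ω a ^ 2 * (ω b * ω c) = ∏ l, ω l ^
      ((if l = a then 2 else 0) + ((if l = b then 1 else 0) + (if l = c then 1 else 0))) := by
  simp only [pow_add, Finset.prod_mul_distrib, prod_pow_ite_eq, pow_one]

lemma integrable_mul_stdGaussianPi (a b : ι) :
    Integrable (fun ω => ω a * ω b) (stdGaussianPi ι) := by
  simp_rw [mul_eq_prod_pow]
  exact integrable_prod_pow_stdGaussianPi _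

lemma integrable_sq_mul_mul_stdGaussianPi (a b c : ι) :
    Integrable (fun ω => ω a ^ 2 * (ω b * ω c)) (stdGaussianPi ι) := by
  simp_rw [sq_mul_mul_eq_prod_pow]
  exact integrable_prod_pow_stdGaussianPi _

lemma integral_pow_stdGaussianPi (a : ι) (p : ℕ) :
    ∫ ω, ω a ^ p ∂stdGaussianPi ι = ∫ x, x ^ p ∂gaussianReal 0 1 := by
  have h := integral_prod_pow_stdGaussianPi (ι := ι) fun l => if l = a then p else 0
  simp_rw [prod_pow_ite_eq] at h
  rw [h, Fintype.prod_eq_single a fun l hl => by simp [hl]]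
  simp

lemma integral_pow_mul_pow_stdGaussianPi {a b : ι} (hab : a ≠ b) (p q : ℕ) :
    ∫ ω, ω a ^ p * ω b ^ q ∂stdGaussianPi ι
      = (∫ x, x ^ p ∂gaussianReal 0 1) * ∫ x, x ^ q ∂gaussianReal 0 1 := by
  have h := integral_prod_pow_stdGaussianPi (ι := ι)
    fun l => (if l = a then p else 0) + (if l = b then q else 0)
  simp only [pow_add, Finset.prod_mul_distrib, prod_pow_ite_eq] at h
  rw [h, Fintype.prod_eq_mul a b hab fun l hl => by simp [hl.1, hl.2]]
  simp [hab, hab.symm]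

lemma integral_mul_stdGaussianPi (a b : ι) :
    ∫ ω, ω a * ω b ∂stdGaussianPi ι = if a = b then 1 else 0 := by
  split_ifs with hab
  · simp [hab, ← sq, integral_pow_stdGaussianPi, integral_sq_gaussianReal]
  · simpa using integral_pow_mul_pow_stdGaussianPi hab 1 1

lemma integral_sq_mul_mul_stdGaussianPi (a b c : ι) :
    ∫ ω, ω a ^ 2 * (ω b * ω c) ∂stdGaussianPi ι
      = if b = c then (if b = a then 3 else 1) else 0 := by
  split_ifs with hbc hba
  · subst hbc hba
    have h (ω : ι → ℝ) : ω b ^ 2 * (ω b * ω b) = ω b ^ 4 := by ring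
    simp_rw [h, integral_pow_stdGaussianPi, integral_pow_four_gaussianReal]
  · subst hbc
    simp_rw [← pow_two, integral_pow_mul_pow_stdGaussianPi (Ne.symm hba), integral_sq_gaussianReal,
      mul_one]
  · simp_rw [sq_mul_mul_eq_prod_pow]
    by_cases hba : b = a
    · exact integral_prod_pow_stdGaussianPi_eq_zero (a := c) (by simp [← hba, Ne.symm hbc])
    · exact integral_prod_pow_stdGaussianPi_eq_zero (a := b) (by simp [hba, hbc])

end StdGaussianPi

section DiagProbe

variable {ι : Type*} [Fintype ι] (B : Matrix ι ι ℝ) (i : ι)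

def diagProbe (ω : ι → ℝ) : ℝ := ω i * (B *ᵥ ω) i

lemma diagProbe_eq_sum (ω : ι → ℝ) : diagProbe B i ω = ∑ j, B i j * (ω i * ω j) := by
  simp only [diagProbe, Matrix.mulVec, dotProduct, Finset.mul_sum]
  exact Finset.sum_congr rfl fun j _ => by ring

lemma sq_diagProbe_eq_sum (ω : ι → ℝ) :
    diagProbe B i ω ^ 2 = ∑ j, ∑ k, B i j * B i k * (ω i ^ 2 * (ω j * ω k)) := by
  rw [diagProbe_eq_sum, sq, Finset.sum_mul_sum]
  exact Fintype.sum_congr _ _ fun j => Fintype.sum_congr _ _ fun k => by ring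

variable [DecidableEq ι]

lemma integral_diagProbe : ∫ ω, diagProbe B i ω ∂stdGaussianPi ι = B i i := by
  simp_rw [diagProbe_eq_sum]
  rw [integral_finsetSum _ fun j _ => (integrable_mul_stdGaussianPi i j).const_mul _]
  simp [integral_const_mul, integral_mul_stdGaussianPi]

lemma integrable_sq_diagProbe : Integrable (fun ω => diagProbe B i ω ^ 2) (stdGaussianPi ι) := by
  simp_rw [sq_diagProbe_eq_sum]
  exact integrable_finsetSum _ fun j _ => integrable_finsetSum _ fun k _ =>
    (integrable_sq_mul_mul_stdGaussianPi i j k).const_mul _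

lemma integral_sq_diagProbe :
    ∫ ω, diagProbe B i ω ^ 2 ∂stdGaussianPi ι = 2 * B i i ^ 2 + ∑ j, B i j ^ 2 := by
  simp_rw [sq_diagProbe_eq_sum]
  rw [integral_finsetSum _ fun j _ => integrable_finsetSum _ fun k _ =>
    (integrable_sq_mul_mul_stdGaussianPi i j k).const_mul _]
  simp_rw [integral_finsetSum _ fun k _ => (integrable_sq_mul_mul_stdGaussianPi i _ k).const_mul _,
    integral_const_mul, integral_sq_mul_mul_stdGaussianPi, mul_ite, mul_zero, Finset.sum_ite_eq,
    Finset.mem_univ, if_true]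
  have h (j : ι) : (if j = i then B i j * B i j * 3 else B i j * B i j * 1)
      = B i j ^ 2 + if j = i then 2 * B i j ^ 2 else 0 := by
    split_ifs <;> ring
  simp_rw [h, Finset.sum_add_distrib, Finset.sum_ite_eq', Finset.mem_univ, if_true]
  ring

lemma memLp_diagProbe : MemLp (diagProbe B i) 2 (stdGaussianPi ι) := by
  refine (memLp_two_iff_integrable_sq ?_).2 (integrable_sq_diagProbe B i)
  rw [show diagProbe B i = _ from funext (diagProbe_eq_sum B i)]
  fun_prop

lemma variance_diagProbe :
    Var[diagProbe B i; stdGaussianPi ι] = B i i ^ 2 + ∑ j, B i j ^ 2 := by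
  rw [variance_eq_sub (memLp_diagProbe B i)]
  simp only [Pi.pow_apply, integral_sq_diagProbe, integral_diagProbe]
  ring

end DiagProbe

theorem stmt_3_general (n m : ℕ) (B : Matrix (Fin n) (Fin n) ℝ) (i : Fin n)
    (hB : B i i ≠ 0) (ε δ : ℝ) (hε0 : 0 < ε) (hδ0 : 0 < δ)
    (hm : (1 / (ε ^ 2 * δ)) * (1 + (∑ j, B i j ^ 2) / B i i ^ 2) ≤ (m : ℝ))
    (P : Measure (Fin m → Fin n → ℝ))
    (hP : P = Measure.pi fun _ : Fin m => Measure.pi fun _ : Fin n => gaussianReal 0 1) :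
    ENNReal.ofReal (1 - δ)
      ≤ P {x | |(1 / (m : ℝ)) * (∑ k, x k i * B.mulVec (x k) i) - B i i| ≤ ε * |B i i|} := by
  subst hP
  have hm0 : 0 < m := Nat.cast_pos.1 <| lt_of_lt_of_le (by positivity) hm
  have : Nonempty (Fin m) := ⟨⟨0, hm0⟩⟩
  have hdev := meas_ge_abs_sampleMean_sub_le_variance_div (ι := Fin m) (memLp_diagProbe B i)
    (c := ε * |B i i|) (by positivity)
  rw [variance_diagProbe, integral_diagProbe, Fintype.card_fin, ← one_div] at hdev
  have hvar : (B i i ^ 2 + ∑ j, B i j ^ 2) / (m * (ε * |B i i|) ^ 2) ≤ δ := by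
    rw [one_div, inv_mul_le_iff₀ (by positivity)] at hm
    rw [mul_pow, sq_abs, div_le_iff₀ (by positivity)]
    calc B i i ^ 2 + ∑ j, B i j ^ 2 = (1 + (∑ j, B i j ^ 2) / B i i ^ 2) * B i i ^ 2 := by
          field_simp
      _ ≤ ε ^ 2 * δ * m * B i i ^ 2 := by gcongr
      _ = δ * (m * (ε ^ 2 * B i i ^ 2)) := by ring
  calc ENNReal.ofReal (1 - δ) = 1 - ENNReal.ofReal δ := by
        rw [ENNReal.ofReal_sub _ hδ0.le, ENNReal.ofReal_one]
    _ ≤ 1 - _ := tsub_le_tsub_left (hdev.trans (ENNReal.ofReal_le_ofReal hvar)) 1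
    _ ≤ _ := one_sub_le_measure_of_compl_subset fun _ hx => by
      simp only [Set.mem_compl_iff, Set.mem_ofPred_eq, not_le] at hx ⊢
      exact hx.le

/-- Lemma 2.1: if
`m ≥ (1/(ε²δ))(1 + ‖[B]_{i,:}‖₂²/B_{ii}²)` then the generalized stochastic diagonal
estimator `EST^m := (1/m) Σ_k ω^{(k)} ⊙ (B ω^{(k)})` satisfies
`P{|(EST^m − diag B)_i| ≤ ε|B_{ii}|} ≥ 1 − δ`. -/
theorem stmt_3 (n m : ℕ) (B : Matrix (Fin n) (Fin n) ℝ) (i : Fin n)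
    (hB : B i i ≠ 0) (ε δ : ℝ) (hε0 : 0 < ε) (hε1 : ε < 1) (hδ0 : 0 < δ) (hδ1 : δ < 1)
    (hm : (1 / (ε ^ 2 * δ)) * (1 + (∑ j, B i j ^ 2) / B i i ^ 2) ≤ (m : ℝ))
    (P : Measure (Fin m → Fin n → ℝ))
    (hP : P = Measure.pi fun _ : Fin m => Measure.pi fun _ : Fin n => gaussianReal 0 1) :
    ENNReal.ofReal (1 - δ)
      ≤ P {x | |(1 / (m : ℝ)) * (∑ k, x k i * B.mulVec (x k) i) - B i i| ≤ ε * |B i i|} :=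
  stmt_3_general n m B i hB ε δ hε0 hδ0 hm P hP
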